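/- arXiv:2110.09854 — 7 statements merged into one kernel-verified Lean document; each statement's English description precedes it below -/
import Mathlib

section
/- Let Y be a real symmetric n×n matrix. Then the supremum of trace(Y*X) over all symmetric matrices X with 0 ⪯ X ⪯ I equals the sum of the positive parts of the eigenvalues of Y, i.e., sup { trace(Y X) : X symmetric, X positive semidefinite, I - X positive semidefinite } = Σᵢ max(λᵢ(Y), 0). Moreover the supremum is attained. -/
/-!
Diagonalize `Y = U D Uᴴ`. Conjugation by the orthogonal `U` preserves the trace and the
constraints `0 ⪯ X ⪯ I`, so it suffices to treat `Y = D` diagonal. Then `tr (D B) = ∑ dᵢ Bᵢᵢ`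
with `0 ≤ Bᵢᵢ ≤ 1`, which is at most `∑ max dᵢ 0`, and equality holds for the projection onto
the coordinates with `dᵢ ≥ 0`.
-/

open Matrix

namespace Matrix

variable {ι : Type*} [Fintype ι] [DecidableEq ι]

lemma PosSemidef.conjStarAlgAut {R : Type*} [CommRing R] [PartialOrder R] [StarRing R]
    {A : Matrix ι ι R} (hA : A.PosSemidef) (u : unitary (Matrix ι ι R)) :
    (Unitary.conjStarAlgAut R _ u A).PosSemidef := by
  simpa [star_eq_conjTranspose] using hA.mul_mul_conjTranspose_same (u : Matrix ι ι R)

lemma trace_conjStarAlgAut {R : Type*} [CommRing R] [StarRing R]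
    (u : unitary (Matrix ι ι R)) (A : Matrix ι ι R) :
    (Unitary.conjStarAlgAut R _ u A).trace = A.trace := by
  rw [Unitary.conjStarAlgAut_apply, trace_mul_cycle, Unitary.coe_star_mul_self, one_mul]

lemma trace_diagonal_mul_le_sum_max_zero (d : ι → ℝ) {B : Matrix ι ι ℝ}
    (hB₀ : B.PosSemidef) (hB₁ : (1 - B).PosSemidef) :
    (diagonal d * B).trace ≤ ∑ i, max (d i) 0 := by
  simp only [trace, diag, diagonal_mul]
  refine Finset.sum_le_sum fun i _ ↦ ?_
  have h₀ : 0 ≤ B i i := hB₀.diag_nonneg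
  have h₁ : B i i ≤ 1 := by simpa using hB₁.diag_nonneg (i := i)
  rcases le_total 0 (d i) with h | h
  · nlinarith [le_max_left (d i) 0]
  · nlinarith [le_max_right (d i) 0]

theorem isGreatest_trace_mul_of_eq_conjStarAlgAut_diagonal {Y : Matrix ι ι ℝ}
    {u : unitary (Matrix ι ι ℝ)} {d : ι → ℝ}
    (hY : Y = Unitary.conjStarAlgAut ℝ _ u (diagonal d)) :
    IsGreatest
      {t : ℝ | ∃ X : Matrix ι ι ℝ,
        X.IsHermitian ∧ X.PosSemidef ∧ (1 - X).PosSemidef ∧ t = (Y * X).trace}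
      (∑ i, max (d i) 0) := by
  set φ := Unitary.conjStarAlgAut ℝ (Matrix ι ι ℝ) u
  subst hY
  constructor
  · let p : ι → ℝ := fun i ↦ if 0 ≤ d i then 1 else 0
    have hp₀ : (diagonal p).PosSemidef := posSemidef_diagonal_iff.mpr fun i ↦ by
      unfold p; split_ifs <;> norm_num
    have hp₁ : (1 - diagonal p).PosSemidef := by
      rw [← diagonal_one, diagonal_sub]
      exact posSemidef_diagonal_iff.mpr fun i ↦ by unfold p; split_ifs <;> norm_num
    refine ⟨φ (diagonal p), (hp₀.conjStarAlgAut u).1, hp₀.conjStarAlgAut u, ?_, ?_⟩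
    · simpa [φ, map_sub, map_one] using hp₁.conjStarAlgAut u
    · rw [← map_mul, trace_conjStarAlgAut, diagonal_mul_diagonal, trace_diagonal]
      refine Finset.sum_congr rfl fun i _ ↦ ?_
      unfold p; split_ifs with h
      · simp [h]
      · simp [(not_le.mp h).le]
  · rintro t ⟨X, -, hX₀, hX₁, rfl⟩
    have hB₀ := hX₀.conjStarAlgAut (star u)
    have hB₁ := hX₁.conjStarAlgAut (star u)
    rw [map_sub, map_one] at hB₁
    calc (φ (diagonal d) * X).trace
        = (φ (diagonal d * Unitary.conjStarAlgAut ℝ _ (star u) X)).trace := by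
          rw [map_mul, ← Unitary.conjStarAlgAut_symm, StarAlgEquiv.apply_symm_apply]
      _ ≤ ∑ i, max (d i) 0 := by
          rw [trace_conjStarAlgAut]
          exact trace_diagonal_mul_le_sum_max_zero d hB₀ hB₁

end Matrix

theorem stmt_1 {n : ℕ} (Y : Matrix (Fin n) (Fin n) ℝ) (hY : Y.IsHermitian) :
    IsGreatest
      {t : ℝ | ∃ X : Matrix (Fin n) (Fin n) ℝ,
        X.IsHermitian ∧ X.PosSemidef ∧ (1 - X).PosSemidef ∧ t = (Y * X).trace}
      (∑ i, max (hY.eigenvalues i) 0) :=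
  isGreatest_trace_mul_of_eq_conjStarAlgAut_diagonal (by simpa using hY.spectral_theorem)
end

section
/- Let λ ∈ ℝʳ and fix an index i with λᵢ ≠ 0. Define q(α) = max(1 - α λᵢ, 0) + Σ_{j ≠ i} max(-α λⱼ, 0) for α ∈ ℝ. Then the infimum of q over ℝ is attained and equals min(1, Σⱼ max(-λⱼ/λᵢ, 0)). -/
theorem stmt_3 {r : ℕ} (l : Fin r → ℝ) (i : Fin r) (hi : l i ≠ 0) :
    IsLeast
      (Set.range fun α : ℝ =>
        max (1 - α * l i) 0 + ∑ j ∈ Finset.univ.erase i, max (-(α * l j)) 0)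
      (min 1 (∑ j, max (-(l j / l i)) 0)) := by
  set S := ∑ j, max (-(l j / l i)) 0 with hS
  have hSerase : S = ∑ j ∈ Finset.univ.erase i, max (-(l j / l i)) 0 := by
    rw [hS, ← Finset.add_sum_erase _ _ (Finset.mem_univ i), div_self hi]
    norm_num
  have hS0 : 0 ≤ S := Finset.sum_nonneg fun j _ => le_max_right _ _
  constructor
  · rcases le_total S 1 with h | h
    · refine ⟨(l i)⁻¹, ?_⟩
      simp only [inv_mul_cancel₀ hi, sub_self, max_self, zero_add]
      rw [min_eq_right h, hSerase]
      refine Finset.sum_congr rfl fun j _ => ?_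
      rw [div_eq_inv_mul]
    · refine ⟨0, ?_⟩
      rw [min_eq_left h]
      simp
  · rintro x ⟨α, rfl⟩
    simp only
    set t := α * l i with ht
    have hrew : ∀ j, α * l j = t * (l j / l i) := by
      intro j
      rw [ht]
      field_simp
    have key : ∀ a : ℝ, 0 ≤ t → max (-(t * a)) 0 = t * max (-a) 0 := by
      intro a h0
      rcases le_total a 0 with ha | ha
      · rw [max_eq_left (by nlinarith : (0:ℝ) ≤ -(t * a)),
          max_eq_left (by linarith : (0:ℝ) ≤ -a)]
        ring
      · rw [max_eq_right (by nlinarith : -(t * a) ≤ 0),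
          max_eq_right (by linarith : -a ≤ 0), mul_zero]
    simp only [hrew]
    rcases le_total t 0 with h0 | h0
    · have h1 : (1:ℝ) ≤ max (1 - t) 0 := le_max_of_le_left (by linarith)
      have h2 : 0 ≤ ∑ j ∈ Finset.univ.erase i, max (-(t * (l j / l i))) 0 :=
        Finset.sum_nonneg fun j _ => le_max_right _ _
      have := min_le_left 1 S
      linarith
    · have hsum : ∑ j ∈ Finset.univ.erase i, max (-(t * (l j / l i))) 0 = t * S := by
        rw [hSerase, Finset.mul_sum]
        exact Finset.sum_congr rfl fun j _ => key _ h0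
      rw [hsum]
      have hm1 := min_le_left 1 S
      have hmS := min_le_right 1 S
      rcases le_total t 1 with h1 | h1
      · have : max (1 - t) 0 = 1 - t := max_eq_left (by linarith)
        rw [this]
        nlinarith
      · have : 0 ≤ max (1 - t) 0 := le_max_right _ _
        nlinarith
end

section
/- (Chubanov's norm-decrease step.) Let H be a real inner product space and let z, p ∈ H satisfy ⟨p, z⟩ ≤ 0, ‖p‖ ≤ 1, z ≠ p, and z ≠ 0. Set α = ⟨p, p - z⟩ / ‖z - p‖² and z' = α z + (1 - α) p. If z' ≠ 0 then 1/‖z'‖² ≥ 1/‖z‖² + 1. -/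
open scoped RealInnerProductSpace

theorem stmt_6 {H : Type*} [NormedAddCommGroup H] [InnerProductSpace ℝ H]
    (z p : H) (hpz : ⟪p, z⟫ ≤ 0) (hp : ‖p‖ ≤ 1) (hzp : z ≠ p) (hz : z ≠ 0)
    (α : ℝ) (hα : α = ⟪p, p - z⟫ / ‖z - p‖ ^ 2)
    (z' : H) (hz' : z' = α • z + (1 - α) • p) (hz'0 : z' ≠ 0) :
    1 / ‖z‖ ^ 2 + 1 ≤ 1 / ‖z'‖ ^ 2 := by
  have hz2 : (0:ℝ) < ‖z‖ ^ 2 := by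
    have := norm_pos_iff.mpr hz; positivity
  have hz'2 : (0:ℝ) < ‖z'‖ ^ 2 := by
    have := norm_pos_iff.mpr hz'0; positivity
  have hzpne : z - p ≠ 0 := sub_ne_zero.mpr hzp
  have hzp2 : (0:ℝ) < ‖z - p‖ ^ 2 := by
    have := norm_pos_iff.mpr hzpne; positivity
  have ht : ⟪z - p, z - p⟫ = ‖z - p‖ ^ 2 := real_inner_self_eq_norm_sq _
  -- orthogonality of z' and z - p
  have horth : ⟪z', z - p⟫ = 0 := by
    have h1 : α * ‖z - p‖ ^ 2 = ⟪p, p - z⟫ := by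
      rw [hα]; field_simp
    have h2 : ⟪z, z - p⟫ - ⟪p, z - p⟫ = ‖z - p‖ ^ 2 := by
      rw [← inner_sub_left, ht]
    have h3 : ⟪p, z - p⟫ = -⟪p, p - z⟫ := by
      rw [show z - p = -(p - z) by abel, inner_neg_right]
    rw [hz', inner_add_left, real_inner_smul_left, real_inner_smul_left]
    linear_combination α * h2 + h3 + h1
  have hz'p : ⟪z', p⟫ = ⟪z', z⟫ := by
    have := horth
    rw [inner_sub_right] at this
    linarith
  have hself : ⟪z', z'⟫ = ‖z'‖ ^ 2 := real_inner_self_eq_norm_sq _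
  have hz'z : ⟪z', z⟫ = ‖z'‖ ^ 2 := by
    have : ⟪z', z'⟫ = α * ⟪z', z⟫ + (1 - α) * ⟪z', p⟫ := by
      nth_rewrite 2 [hz']
      rw [inner_add_right, real_inner_smul_right, real_inner_smul_right]
    rw [hz'p] at this
    nlinarith
  set a : ℝ := 1 / ‖z‖ ^ 2 with ha
  set u : H := a • z + p with hu
  have hcu : ⟪z', u⟫ = (a + 1) * ‖z'‖ ^ 2 := by
    rw [hu, inner_add_right, real_inner_smul_right, hz'p, hz'z]
    ring
  have hzz : ⟪z, z⟫ = ‖z‖ ^ 2 := real_inner_self_eq_norm_sq _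
  have hpp : ⟪p, p⟫ = ‖p‖ ^ 2 := real_inner_self_eq_norm_sq _
  have huu : ⟪u, u⟫ ≤ a + 1 := by
    rw [hu]
    simp only [inner_add_left, inner_add_right, real_inner_smul_left, real_inner_smul_right,
      real_inner_comm p z]
    have ha2 : a * a * ⟪z, z⟫ = a := by
      rw [hzz, ha]; field_simp
    have hp2 : ⟪p, p⟫ ≤ 1 := by
      rw [hpp]; nlinarith [norm_nonneg p]
    have hanonneg : 0 ≤ a := by positivity
    nlinarith
  have hcs := real_inner_mul_inner_self_le z' u
  rw [hcu, hself] at hcs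
  have ha1 : (0:ℝ) < a + 1 := by positivity
  have key : (a + 1) * ‖z'‖ ^ 2 ≤ 1 := by nlinarith
  rw [le_div_iff₀ hz'2]
  linarith
end

section
/- (Roos-type cut bound, vector version.) Let A be a real m×n matrix, let y ∈ ℝⁿ with y ≥ 0 componentwise, and let z be the orthogonal projection of y onto ker A. Then for every x ∈ ℝⁿ with A x = 0 and 0 ≤ xᵢ ≤ 1 for all i, and for every index j, we have yⱼ · xⱼ ≤ Σᵢ max(zᵢ, 0) ≤ √n · ‖z‖₂. -/
open Matrix

theorem stmt_7 {m n : ℕ} (A : Matrix (Fin m) (Fin n) ℝ) (y z : Fin n → ℝ)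
    (hy : ∀ i, 0 ≤ y i)
    (hzker : A.mulVec z = 0)
    (hproj : ∀ w : Fin n → ℝ, A.mulVec w = 0 → ∑ i, (y i - z i) * w i = 0)
    (x : Fin n → ℝ) (hx : A.mulVec x = 0) (hx01 : ∀ i, 0 ≤ x i ∧ x i ≤ 1)
    (j : Fin n) :
    y j * x j ≤ ∑ i, max (z i) 0 ∧
      ∑ i, max (z i) 0 ≤ Real.sqrt n * Real.sqrt (∑ i, (z i) ^ 2) := by
  constructor
  · have h0 := hproj x hx
    have hsum : ∑ i, y i * x i = ∑ i, z i * x i := by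
      have : ∑ i, (y i * x i - z i * x i) = 0 := by
        simpa [sub_mul] using h0
      have := sub_eq_zero.mp (by simpa [Finset.sum_sub_distrib] using this)
      exact this
    have h1 : y j * x j ≤ ∑ i, y i * x i := by
      apply Finset.single_le_sum (f := fun i => y i * x i)
      · intro i _
        exact mul_nonneg (hy i) (hx01 i).1
      · exact Finset.mem_univ j
    refine h1.trans (hsum.le.trans ?_)
    apply Finset.sum_le_sum
    intro i _
    rcases le_or_gt (z i) 0 with h | h
    · calc z i * x i ≤ 0 := mul_nonpos_of_nonpos_of_nonneg h (hx01 i).1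
        _ ≤ max (z i) 0 := le_max_right _ _
    · calc z i * x i ≤ z i * 1 := mul_le_mul_of_nonneg_left (hx01 i).2 h.le
        _ = z i := mul_one _
        _ ≤ max (z i) 0 := le_max_left _ _
  · have hnn : 0 ≤ ∑ i, max (z i) 0 :=
      Finset.sum_nonneg fun i _ => le_max_right _ _
    have hzsq : 0 ≤ ∑ i, (z i) ^ 2 :=
      Finset.sum_nonneg fun i _ => sq_nonneg _
    have hcs : (∑ i, max (z i) 0) ^ 2 ≤ n * ∑ i, (z i) ^ 2 := by
      calc (∑ i, max (z i) 0) ^ 2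
          ≤ (Finset.univ.card : ℝ) * ∑ i : Fin n, (max (z i) 0) ^ 2 := by
            exact sq_sum_le_card_mul_sum_sq
        _ ≤ n * ∑ i, (z i) ^ 2 := by
            simp only [Finset.card_univ, Fintype.card_fin]
            refine mul_le_mul_of_nonneg_left (Finset.sum_le_sum ?_) (by positivity)
            intro i _
            rcases le_or_gt (z i) 0 with h | h
            · simp [max_eq_right h, sq_nonneg]
            · rw [max_eq_left h.le]
    rw [← Real.sqrt_mul (by positivity)]
    exact Real.le_sqrt_of_sq_le hcs
end

section
/- Let u ∈ ℝⁿ be a unit vector, a ∈ ℝ, and Y a real symmetric n×n matrix. Then ‖(I + a uuᵀ) Y (I + a uuᵀ)‖_F² = ‖Y‖_F² + 2(2a + a²) · uᵀ Y² u + (2a + a²)² · (uᵀ Y u)², where ‖·‖_F is the Frobenius norm. -/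
/-!
With `P = uuᵀ` idempotent and `B = I + aP` symmetric, cyclicity of the trace gives
`‖BYB‖_F² = tr(Yᵀ B² Y B²)`, and `B² = I + (2a + a²) P`. Expanding, the cross terms are
traces of `Yᵀ Y P` and `Yᵀ P Y`, each equal to `uᵀ Y² u`, and the quadratic term is
`tr(Yᵀ P Y P) = (uᵀ Y u)²` because `P M P = (uᵀ M u) P`.
-/

open Matrix

namespace Matrix

variable {R n : Type*} [CommRing R] [Fintype n]

theorem trace_vecMulVec_mul (u v : n → R) (M : Matrix n n R) :
    (vecMulVec u v * M).trace = v ⬝ᵥ M *ᵥ u := by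
  rw [vecMulVec_mul, trace_vecMulVec, dotProduct_comm, dotProduct_mulVec]

theorem vecMulVec_mul_mul_vecMulVec (u v w x : n → R) (M : Matrix n n R) :
    vecMulVec u v * M * vecMulVec w x = (v ⬝ᵥ M *ᵥ w) • vecMulVec u x := by
  rw [vecMulVec_mul, vecMulVec_mul_vecMulVec, ← dotProduct_mulVec, vecMulVec_smul]

theorem isIdempotentElem_vecMulVec {u v : n → R} (h : v ⬝ᵥ u = 1) :
    IsIdempotentElem (vecMulVec u v) := by
  rw [IsIdempotentElem, vecMulVec_mul_vecMulVec, h, one_smul]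

theorem trace_transpose_mul_self_mul_mul (B Y : Matrix n n R) :
    ((B * Y * B)ᵀ * (B * Y * B)).trace = (Yᵀ * (Bᵀ * B) * Y * (B * Bᵀ)).trace := by
  simp only [transpose_mul, Matrix.mul_assoc]
  rw [← trace_mul_comm]
  simp only [Matrix.mul_assoc]

theorem trace_transpose_mul_one_add_smul_vecMulVec_mul [DecidableEq n] (u : n → R) (c : R)
    (Y : Matrix n n R) :
    (Yᵀ * (1 + c • vecMulVec u u) * Y * (1 + c • vecMulVec u u)).trace =
      (Yᵀ * Y).trace + c * (u ⬝ᵥ (Y * Yᵀ) *ᵥ u) + c * (u ⬝ᵥ (Yᵀ * Y) *ᵥ u)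
        + c ^ 2 * (u ⬝ᵥ Y *ᵥ u) ^ 2 := by
  set P := vecMulVec u u
  have hYPY : (Yᵀ * P * Y).trace = u ⬝ᵥ (Y * Yᵀ) *ᵥ u := by
    rw [Matrix.mul_assoc, trace_mul_comm, Matrix.mul_assoc, trace_vecMulVec_mul]
  have hYYP : (Yᵀ * Y * P).trace = u ⬝ᵥ (Yᵀ * Y) *ᵥ u := by
    rw [trace_mul_comm, trace_vecMulVec_mul]
  have hYPYP : (Yᵀ * P * Y * P).trace = (u ⬝ᵥ Y *ᵥ u) ^ 2 := by
    rw [trace_mul_comm, ← Matrix.mul_assoc, ← Matrix.mul_assoc, vecMulVec_mul_mul_vecMulVec,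
      smul_mul_assoc, trace_smul, trace_vecMulVec_mul, dotProduct_transpose_mulVec, smul_eq_mul,
      sq]
  have hexpand : Yᵀ * (1 + c • P) * Y * (1 + c • P) =
      Yᵀ * Y + c • (Yᵀ * P * Y) + c • (Yᵀ * Y * P) + c ^ 2 • (Yᵀ * P * Y * P) := by
    simp only [Matrix.mul_add, Matrix.add_mul, Matrix.mul_one, Matrix.mul_smul, Matrix.smul_mul]
    module
  simp only [hexpand, trace_add, trace_smul, hYPY, hYYP, hYPYP, smul_eq_mul]

end Matrix

theorem IsIdempotentElem.one_add_smul_mul_self {R A : Type*} [CommRing R] [Ring A] [Algebra R A]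
    {p : A} (hp : IsIdempotentElem p) (a : R) :
    (1 + a • p) * (1 + a • p) = 1 + (2 * a + a ^ 2) • p := by
  simp only [add_mul, mul_add, one_mul, mul_one, smul_mul_smul_comm, hp.eq]
  module

theorem stmt_12 {n : ℕ} (u : Fin n → ℝ) (hu : ∑ i, u i ^ 2 = 1) (a : ℝ)
    (Y : Matrix (Fin n) (Fin n) ℝ) (hY : Y.IsSymm) :
    (((1 + a • vecMulVec u u) * Y * (1 + a • vecMulVec u u))ᵀ *
        ((1 + a • vecMulVec u u) * Y * (1 + a • vecMulVec u u))).trace =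
      (Yᵀ * Y).trace + 2 * (2 * a + a ^ 2) * (u ⬝ᵥ (Y * Y).mulVec u)
        + (2 * a + a ^ 2) ^ 2 * (u ⬝ᵥ Y.mulVec u) ^ 2 := by
  have hP : IsIdempotentElem (vecMulVec u u) :=
    isIdempotentElem_vecMulVec (by simpa only [dotProduct, sq] using hu)
  have hB : (1 + a • vecMulVec u u)ᵀ = 1 + a • vecMulVec u u := by
    rw [transpose_add, transpose_smul, transpose_one, transpose_vecMulVec]
  rw [trace_transpose_mul_self_mul_mul, hB, hP.one_add_smul_mul_self,
    trace_transpose_mul_one_add_smul_vecMulVec_mul, hY.eq]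
  ring
end

section
/- Let u ∈ ℝⁿ be a unit vector, a > 0, and Y a real symmetric positive definite n×n matrix. If ‖(I + a uuᵀ) Y (I + a uuᵀ)‖_F = 1, then ‖Y‖_F < 1. -/
open Matrix

/-! With `P = uuᵀ` idempotent and `M = 1 + a P`, we have `M² = 1 + b P` with `b = 2a + a²`, so by
cyclicity of the trace `‖MYM‖_F² = tr (Y M² Y M²) = ‖Y‖_F² + 2b ‖Yu‖² + b² (uᵀYu)²`.
Positive definiteness makes the last term strictly positive. -/

namespace Matrix

variable {ι R : Type*} [Fintype ι] [CommRing R]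

lemma trace_mul_vecMulVec_self_mul {Y : Matrix ι ι R} (hY : Yᵀ = Y) (u : ι → R) :
    trace (Y * vecMulVec u u * Y) = (Y *ᵥ u) ⬝ᵥ (Y *ᵥ u) := by
  rw [mul_vecMulVec, vecMulVec_mul, trace_vecMulVec, ← mulVec_transpose, hY]

lemma trace_mul_vecMulVec_self_mul_vecMulVec_self (Y : Matrix ι ι R) (u : ι → R) :
    trace (Y * vecMulVec u u * Y * vecMulVec u u) = (u ⬝ᵥ (Y *ᵥ u)) ^ 2 := by
  rw [mul_vecMulVec Y, vecMulVec_mul, vecMulVec_mul_vecMulVec, trace_vecMulVec, dotProduct_smul,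
    ← dotProduct_mulVec, dotProduct_comm (Y *ᵥ u), smul_eq_mul, sq]

lemma trace_conj_mul_conj (M Y : Matrix ι ι R) :
    trace (M * Y * M * (M * Y * M)) = trace (Y * (M * M) * Y * (M * M)) := by
  rw [show M * Y * M * (M * Y * M) = M * (Y * (M * M) * Y * M) by simp only [Matrix.mul_assoc],
    trace_mul_comm]
  simp only [Matrix.mul_assoc]

lemma isIdempotentElem_vecMulVec_self {u : ι → R} (hu : u ⬝ᵥ u = 1) :
    IsIdempotentElem (vecMulVec u u) := by
  rw [IsIdempotentElem, vecMulVec_mul_vecMulVec, hu, one_smul]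

variable [DecidableEq ι]

lemma one_add_smul_mul_self {P : Matrix ι ι R} (hP : IsIdempotentElem P) (a : R) :
    (1 + a • P) * (1 + a • P) = 1 + (2 * a + a ^ 2) • P := by
  simp only [add_mul, mul_add, one_mul, mul_one, Matrix.smul_mul, Matrix.mul_smul, hP.eq,
    smul_smul]
  module

lemma trace_mul_one_add_smul_mul_one_add_smul (Y P : Matrix ι ι R) (b : R) :
    trace (Y * (1 + b • P) * Y * (1 + b • P)) =
      trace (Y * Y) + 2 * b * trace (Y * P * Y) + b ^ 2 * trace (Y * P * Y * P) := by
  have hcycle : trace (Y * Y * P) = trace (Y * P * Y) := by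
    rw [Matrix.mul_assoc, trace_mul_comm]
  simp only [mul_add, add_mul, mul_one, Matrix.mul_smul, Matrix.smul_mul, trace_add, trace_smul,
    smul_eq_mul, hcycle]
  ring

lemma trace_sq_conj_one_add_smul_vecMulVec {u : ι → R} (hu : u ⬝ᵥ u = 1)
    {Y : Matrix ι ι R} (hY : Yᵀ = Y) (a : R) :
    let M := 1 + a • vecMulVec u u
    trace ((M * Y * M)ᵀ * (M * Y * M)) = trace (Yᵀ * Y) +
      2 * (2 * a + a ^ 2) * ((Y *ᵥ u) ⬝ᵥ (Y *ᵥ u)) + (2 * a + a ^ 2) ^ 2 * (u ⬝ᵥ (Y *ᵥ u)) ^ 2 := by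
  intro M
  have hM : Mᵀ = M := by simp [M, transpose_vecMulVec]
  have hMYM : (M * Y * M)ᵀ = M * Y * M := by
    rw [transpose_mul, transpose_mul, hM, hY, Matrix.mul_assoc]
  rw [hMYM, hY, trace_conj_mul_conj,
    one_add_smul_mul_self (isIdempotentElem_vecMulVec_self hu),
    trace_mul_one_add_smul_mul_one_add_smul, trace_mul_vecMulVec_self_mul hY,
    trace_mul_vecMulVec_self_mul_vecMulVec_self]

end Matrix

theorem stmt_13 {n : ℕ} (u : Fin n → ℝ) (hu : ∑ i, u i ^ 2 = 1) (a : ℝ) (ha : 0 < a)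
    (Y : Matrix (Fin n) (Fin n) ℝ) (hY : Y.PosDef)
    (h : Real.sqrt ((((1 + a • vecMulVec u u) * Y * (1 + a • vecMulVec u u))ᵀ *
        ((1 + a • vecMulVec u u) * Y * (1 + a • vecMulVec u u))).trace) = 1) :
    Real.sqrt ((Yᵀ * Y).trace) < 1 := by
  have hunit : u ⬝ᵥ u = 1 := by simpa [dotProduct, sq] using hu
  have hYt : Yᵀ = Y := by simpa using hY.isHermitian.eq
  have hquad : 0 < u ⬝ᵥ (Y *ᵥ u) := by
    simpa using hY.dotProduct_mulVec_pos (x := u) (by rintro rfl; simp at hunit)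
  have hnorm : 0 ≤ (Y *ᵥ u) ⬝ᵥ (Y *ᵥ u) := dotProduct_self_star_nonneg _
  rw [Real.sqrt_eq_one, trace_sq_conj_one_add_smul_vecMulVec hunit hYt] at h
  rw [Real.sqrt_lt' one_pos]
  have hb : 0 < 2 * a + a ^ 2 := by positivity
  nlinarith [mul_pos (pow_pos hb 2) (pow_pos hquad 2), mul_nonneg hb.le hnorm]
end

section
/- Let X̄ be a real symmetric positive definite n×n matrix with λ_max(X̄) ≤ 1, and let Ū be a positive semidefinite matrix with trace(Ū) = n and trace(X̄ Ū) = n. Then for every positive definite X with λ_max(X) ≤ 1 and trace((Ū - X̄⁻¹) X) = 0, we have det(X) ≤ det(X̄). -/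
/-!
Since `X ≤ 1` and `Ub ⪰ 0`, we get `trace (Ub X) ≤ trace Ub = n`, and the orthogonality condition
turns this into `trace (Xb⁻¹ X) ≤ n`. The matrix `Xb^{-1/2} X Xb^{-1/2}` is positive semidefinite
with trace at most `n`, so AM-GM on its eigenvalues bounds its determinant `det X / det Xb` by `1`.
-/

open Matrix
open scoped MatrixOrder ComplexOrder

theorem Real.prod_le_one_of_sum_le_card {ι : Type*} [Fintype ι] {z : ι → ℝ} (hz : ∀ i, 0 ≤ z i)
    (h : ∑ i, z i ≤ Fintype.card ι) : ∏ i, z i ≤ 1 := by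
  rcases isEmpty_or_nonempty ι with _ | _
  · simp
  have hcard : (0 : ℝ) < Fintype.card ι := by exact_mod_cast Fintype.card_pos
  have amgm := Real.geom_mean_le_arith_mean Finset.univ (fun _ ↦ 1) z (by simp) (by simpa using hcard)
    (fun i _ ↦ hz i)
  simp only [Real.rpow_one, Finset.sum_const, Finset.card_univ, nsmul_eq_mul, mul_one, one_mul] at amgm
  by_contra! hgt
  have : 1 < (∏ i, z i) ^ (Fintype.card ι : ℝ)⁻¹ := Real.one_lt_rpow hgt (by positivity)
  have : (∑ i, z i) / Fintype.card ι ≤ 1 := (div_le_one hcard).mpr h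
  linarith

variable {ι 𝕜 : Type*} [Fintype ι] [DecidableEq ι] [RCLike 𝕜]

theorem Matrix.IsHermitian.le_one_of_eigenvalues_le_one {A : Matrix ι ι 𝕜} (hA : A.IsHermitian)
    (h : ∀ i, hA.eigenvalues i ≤ 1) : A ≤ 1 := by
  rw [CFC.le_one_iff (R := ℝ) A, hA.spectrum_real_eq_range_eigenvalues]
  rintro _ ⟨i, rfl⟩
  exact h i

theorem Matrix.PosSemidef.trace_mul_nonneg {A B : Matrix ι ι 𝕜} (hA : A.PosSemidef)
    (hB : B.PosSemidef) : 0 ≤ (A * B).trace := by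
  set S := CFC.sqrt A
  have hS : Sᴴ = S := (CFC.sqrt_nonneg A).posSemidef.1
  have hSS : S * S = A := CFC.sqrt_mul_sqrt_self A hA.nonneg
  have hSBS : (S * B * S).PosSemidef := by
    simpa only [hS] using hB.conjTranspose_mul_mul_same S
  simpa [trace_mul_cycle, hSS] using hSBS.trace_nonneg

theorem Matrix.PosSemidef.det_le_one_of_trace_le_card {A : Matrix ι ι ℝ} (hA : A.PosSemidef)
    (h : A.trace ≤ Fintype.card ι) : A.det ≤ 1 := by
  rw [hA.1.det_eq_prod_eigenvalues]
  rw [hA.1.trace_eq_sum_eigenvalues] at h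
  simpa using Real.prod_le_one_of_sum_le_card hA.eigenvalues_nonneg (by simpa using h)

theorem Matrix.PosDef.det_le_det_of_trace_inv_mul_le_card {X Y : Matrix ι ι ℝ} (hY : Y.PosDef)
    (hX : X.PosSemidef) (h : (Y⁻¹ * X).trace ≤ Fintype.card ι) : X.det ≤ Y.det := by
  set S := CFC.sqrt Y⁻¹
  have hS : Sᴴ = S := (CFC.sqrt_nonneg _).posSemidef.1
  have hSS : S * S = Y⁻¹ := CFC.sqrt_mul_sqrt_self _ hY.inv.posSemidef.nonneg
  have hSXS : (S * X * S).PosSemidef := by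
    simpa only [hS] using hX.mul_mul_conjTranspose_same S
  have hdet : (S * X * S).det = X.det / Y.det := by
    rw [det_mul, det_mul, mul_right_comm, ← det_mul, hSS, det_nonsing_inv, Ring.inverse_eq_inv',
      inv_mul_eq_div]
  have := hSXS.det_le_one_of_trace_le_card (by rwa [trace_mul_cycle, hSS])
  rwa [hdet, div_le_one hY.det_pos] at this

theorem stmt_16_general {n : ℕ} (Xb Ub X : Matrix (Fin n) (Fin n) ℝ)
    (hXb : Xb.PosDef) (hUb : Ub.PosSemidef) (hX : X.PosDef)
    (hUbtr : Ub.trace = n)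
    (hXmax : ⨆ i : Fin n, hX.1.eigenvalues i ≤ 1)
    (horth : ((Ub - Xb⁻¹) * X).trace = 0) :
    X.det ≤ Xb.det := by
  have hX_le_one : X ≤ 1 := hX.1.le_one_of_eigenvalues_le_one
    fun i ↦ (le_ciSup (Finite.bddAbove_range _) i).trans hXmax
  have hUbX : (Ub * X).trace ≤ n := by
    have := hUb.trace_mul_nonneg (le_iff.mp hX_le_one)
    rw [mul_sub, mul_one, trace_sub, hUbtr] at this
    linarith
  have hXbX : (Xb⁻¹ * X).trace = (Ub * X).trace := by
    rw [sub_mul, trace_sub, sub_eq_zero] at horth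
    exact horth.symm
  exact hXb.det_le_det_of_trace_inv_mul_le_card hX.posSemidef (by simpa [hXbX] using hUbX)

theorem stmt_16 {n : ℕ} (Xb Ub X : Matrix (Fin n) (Fin n) ℝ)
    (hXb : Xb.PosDef) (hUb : Ub.PosSemidef) (hX : X.PosDef)
    (hXbmax : ⨆ i : Fin n, hXb.1.eigenvalues i ≤ 1)
    (hUbtr : Ub.trace = n)
    (htr : (Xb * Ub).trace = n)
    (hXmax : ⨆ i : Fin n, hX.1.eigenvalues i ≤ 1)
    (horth : ((Ub - Xb⁻¹) * X).trace = 0) :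
    X.det ≤ Xb.det :=
  stmt_16_general Xb Ub X hXb hUb hX hUbtr hXmax horth
end
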